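/- arXiv:1111.7205 — 3 statements merged into one kernel-verified Lean document; each statement's English description precedes it below -/
import Mathlib

section
/- Let {Y_t}_{t∈ℤ} be a strictly stationary process whose marginal distribution function F is continuous and strictly increasing on ℝ, and assume Σ_{k∈ℤ} |γ_k(x_1,x_2)| < ∞ for all (x_1,x_2) ∈ ℝ². Then the following three statements are equivalent: (1) for every k ∈ ℤ, the joint law of (Y_0, Y_k) equals the joint law of (Y_0, Y_{−k}) (time-reversibility); (2) Im f_{x_1,x_2}(ω) = 0 for all ω ∈ ℝ and all (x_1,x_2) ∈ ℝ²; (3) Im f_{q_{τ_1},q_{τ_2}}(ω) = 0 for all ω ∈ ℝ and all (τ_1,τ_2) ∈ (0,1)². -/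
open MeasureTheory ProbabilityTheory Filter Topology

noncomputable section

namespace DHKV

variable {Ω : Type} [MeasurableSpace Ω]

/-- Indicator of the event `{Z ≤ x}`, as a real-valued function. -/
def ind (Z : Ω → ℝ) (x : ℝ) : Ω → ℝ := fun ωo => if Z ωo ≤ x then 1 else 0

/-- Covariance of two real random variables. -/
def cov (P : Measure Ω) (f g : Ω → ℝ) : ℝ :=
  (∫ ωo, f ωo * g ωo ∂P) - (∫ ωo, f ωo ∂P) * (∫ ωo, g ωo ∂P)

/-- Strict stationarity of a process indexed by `ℤ`. -/
def StrictlyStationary (P : Measure Ω) (Y : ℤ → Ω → ℝ) : Prop :=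
  ∀ (k : ℤ) (m : ℕ) (t : Fin m → ℤ),
    P.map (fun ωo (i : Fin m) => Y (t i + k) ωo)
      = P.map (fun ωo (i : Fin m) => Y (t i) ωo)

/-- The (marginal) distribution function of a real random variable. -/
def cdf' (P : Measure Ω) (Z : Ω → ℝ) : ℝ → ℝ := fun x => (P {ωo | Z ωo ≤ x}).toReal

/-- Generalized inverse (quantile function) of a distribution function. -/
def quantile (F : ℝ → ℝ) (τ : ℝ) : ℝ := sInf {x : ℝ | τ ≤ F x}

/-- Laplace cross-covariance kernel of lag `k`. -/
def laplaceCov (P : Measure Ω) (Y : ℤ → Ω → ℝ) (k : ℤ) (x₁ x₂ : ℝ) : ℝ :=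
  cov P (ind (Y k) x₁) (ind (Y 0) x₂)

/-- Laplace spectral density kernel. -/
def laplaceSpec (P : Measure Ω) (Y : ℤ → Ω → ℝ) (x₁ x₂ ω : ℝ) : ℂ :=
  (1 / (2 * (Real.pi : ℂ))) *
    ∑' k : ℤ, (laplaceCov P Y k x₁ x₂ : ℂ) * Complex.exp (-(Complex.I) * (k : ℂ) * (ω : ℂ))

/-- Copula cross-covariance kernel of lag `k`. -/
def copulaCov (P : Measure Ω) (Y : ℤ → Ω → ℝ) (k : ℤ) (τ₁ τ₂ : ℝ) : ℝ :=
  cov P (ind (fun ωo => cdf' P (Y 0) (Y k ωo)) τ₁)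
        (ind (fun ωo => cdf' P (Y 0) (Y 0 ωo)) τ₂)

/-- Copula spectral density kernel. -/
def copulaSpec (P : Measure Ω) (Y : ℤ → Ω → ℝ) (τ₁ τ₂ ω : ℝ) : ℂ :=
  (1 / (2 * (Real.pi : ℂ))) *
    ∑' k : ℤ, (copulaCov P Y k τ₁ τ₂ : ℂ) * Complex.exp (-(Complex.I) * (k : ℂ) * (ω : ℂ))

end DHKV

open DHKV

/-!
Under strict stationarity the laws of `(Y₀, Y_k)` and `(Y₀, Y_{-k})` have the same marginals, so
(since the rectangles `Iic x₂ ×ˢ Iic x₁` determine a law on `ℝ²`) they coincide iff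
`γ_k(x₁, x₂) = γ_{-k}(x₁, x₂)` for all `x₁, x₂`. For a real absolutely summable sequence `γ`, the
sum `∑ γ_k e^{-ikω}` is real iff it equals its conjugate `∑ γ_{-k} e^{-ikω}`; if this holds for
every `ω`, the trigonometric series with coefficients `γ_k - γ_{-k}` vanishes identically, and
uniqueness of Fourier coefficients gives `γ_k = γ_{-k}`. Finally, a strictly increasing `F` turns
`1{F(Y) ≤ F(x)}` into `1{Y ≤ x}`, so the copula kernel at `(F x₁, F x₂)` is the Laplace kernel at
`(x₁, x₂)`, and a continuous strictly increasing distribution function maps `ℝ` onto `(0, 1)`.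
-/

section TrigonometricSeries

open Complex AddCircle ComplexConjugate

theorem fourierCoeff_tsum_smul_fourier {T : ℝ} [Fact (0 < T)] {c : ℤ → ℂ}
    (hc : Summable fun k => ‖c k‖) (n : ℤ) :
    fourierCoeff (fun x : AddCircle T => ∑' k, c k • fourier k x) n = c n := by
  set F : ℤ → AddCircle T → ℂ := fun k x => fourier (-n) x • c k • fourier k x
  have hnorm : ∀ k x, ‖F k x‖ = ‖c k‖ := fun k x => by
    simp only [F, smul_eq_mul, norm_mul, fourier_apply, Circle.norm_coe, one_mul, mul_one]
  have hint : ∀ k, Integrable (F k) haarAddCircle := fun k =>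
    (by fun_prop : Continuous (F k)).integrable_of_hasCompactSupport
      (HasCompactSupport.of_compactSpace _)
  have hsum : Summable fun k => ∫ x, ‖F k x‖ ∂haarAddCircle := by
    simpa only [hnorm, integral_const, probReal_univ, smul_eq_mul, one_mul] using hc
  calc fourierCoeff (fun x : AddCircle T => ∑' k, c k • fourier k x) n
      = ∫ x, ∑' k, F k x ∂haarAddCircle := by
        simp only [fourierCoeff, F, smul_eq_mul, tsum_mul_left]
    _ = ∑' k, c k • fourierCoeff (T := T) (fourier k) n := by
        rw [← integral_tsum_of_summable_integral_norm hint hsum]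
        simp only [F, fourierCoeff, smul_comm (fourier (-n) _) (c _), integral_smul]
    _ = c n := by
        simp_rw [fourierCoeff_fourier]
        rw [tsum_eq_single n fun k hk => by simp [hk.symm]]
        simp

lemma fourier_two_pi_coe_neg (k : ℤ) (ω : ℝ) :
    fourier (T := 2 * Real.pi) k ↑(-ω) = exp (-I * k * ω) := by
  rw [fourier_coe_apply]
  congr 1
  push_cast
  field_simp

theorem eq_zero_of_tsum_mul_exp_eq_zero {c : ℤ → ℂ} (hc : Summable fun k => ‖c k‖)
    (h : ∀ ω : ℝ, ∑' k, c k * exp (-I * k * ω) = 0) : c = 0 := by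
  have : Fact (0 < 2 * Real.pi) := ⟨Real.two_pi_pos⟩
  have hzero : (fun x : AddCircle (2 * Real.pi) => ∑' k, c k • fourier k x) = 0 := by
    funext x
    induction x using QuotientAddGroup.induction_on with
    | H t =>
      rw [← neg_neg t]
      simpa only [fourier_two_pi_coe_neg, smul_eq_mul, Pi.zero_apply] using h (-t)
  funext n
  rw [← fourierCoeff_tsum_smul_fourier (T := 2 * Real.pi) hc n, hzero]
  simp [fourierCoeff]

lemma norm_exp_neg_I_mul (k : ℤ) (ω : ℝ) : ‖exp (-I * k * ω)‖ = 1 := by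
  simp [norm_exp]

lemma summable_mul_exp {c : ℤ → ℂ} (hc : Summable fun k => ‖c k‖) (ω : ℝ) :
    Summable fun k : ℤ => c k * exp (-I * k * ω) :=
  .of_norm <| by simpa only [norm_mul, norm_exp_neg_I_mul, mul_one] using hc

lemma conj_tsum_mul_exp (c : ℤ → ℝ) (ω : ℝ) :
    conj (∑' k, (c k : ℂ) * exp (-I * k * ω)) = ∑' k, (c (-k) : ℂ) * exp (-I * k * ω) := by
  rw [conj_tsum, ← (Equiv.neg ℤ).tsum_eq]
  congr 1
  funext k
  simp [← exp_conj]

theorem im_tsum_mul_exp_eq_zero_iff {c : ℤ → ℝ} (hc : Summable fun k => |c k|) :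
    (∀ ω : ℝ, (∑' k, (c k : ℂ) * exp (-I * k * ω)).im = 0) ↔ ∀ k, c k = c (-k) := by
  have hc' : Summable fun k => ‖(c k : ℂ)‖ := by simpa only [norm_real, Real.norm_eq_abs] using hc
  have hc'' : Summable fun k => ‖(c (-k) : ℂ)‖ := (Equiv.neg ℤ).summable_iff.mpr hc'
  simp_rw [← conj_eq_iff_im, conj_tsum_mul_exp]
  constructor
  · intro h
    have hodd := eq_zero_of_tsum_mul_exp_eq_zero (c := fun k => (c k : ℂ) - c (-k))
      ((hc'.add hc'').of_nonneg_of_le (fun _ => norm_nonneg _) fun _ => norm_sub_le _ _)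
      fun ω => by
        simp_rw [sub_mul]
        rw [(summable_mul_exp hc' ω).tsum_sub (summable_mul_exp hc'' ω), h, sub_self]
    intro k
    simpa only [Pi.zero_apply, sub_eq_zero, ofReal_inj] using congrFun hodd k
  · intro h ω
    simp_rw [← h]

end TrigonometricSeries

open Set in
theorem MeasureTheory.Measure.ext_of_Iic_prod_Iic {μ ν : Measure (ℝ × ℝ)} [IsFiniteMeasure μ]
    (h : ∀ a b : ℝ, μ (Iic a ×ˢ Iic b) = ν (Iic a ×ˢ Iic b)) : μ = ν := by
  have hspan : IsCountablySpanning (range (Iic : ℝ → Set ℝ)) :=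
    ⟨fun n => Iic (n : ℝ), fun n => mem_range_self _,
      iUnion_eq_univ_iff.mpr fun x => (exists_nat_ge x).imp fun _ => mem_Iic.mpr⟩
  have hgen : (inferInstance : MeasurableSpace (ℝ × ℝ)) =
      MeasurableSpace.generateFrom (image2 (· ×ˢ ·) (range Iic) (range Iic)) := by
    rw [← generateFrom_prod_eq hspan hspan, ← borel_eq_generateFrom_Iic, ← BorelSpace.measurable_eq]
  refine ext_of_generateFrom_of_iUnion _ (fun n => Iic (n : ℝ) ×ˢ Iic (n : ℝ)) hgen
    (isPiSystem_Iic.prod isPiSystem_Iic) ?_ (fun n => mem_image2_of_mem ⟨_, rfl⟩ ⟨_, rfl⟩)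
    (fun _ => measure_ne_top _ _) ?_
  · refine iUnion_eq_univ_iff.mpr fun p => ?_
    obtain ⟨n, hn⟩ := exists_nat_ge (max p.1 p.2)
    exact ⟨n, (le_max_left _ _).trans hn, (le_max_right _ _).trans hn⟩
  · rintro _ ⟨_, ⟨a, rfl⟩, _, ⟨b, rfl⟩, rfl⟩
    exact h a b

namespace DHKV

open Set

lemma ind_eq_indicator {Ω : Type} (Z : Ω → ℝ) (x : ℝ) : ind Z x = {ω | Z ω ≤ x}.indicator 1 := by
  ext ω
  simp [ind, indicator_apply]

lemma ind_comp_of_strictMono {Ω : Type} {F : ℝ → ℝ} (hF : StrictMono F) (Z : Ω → ℝ) (x : ℝ) :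
    ind (fun ω => F (Z ω)) (F x) = ind Z x := by
  funext ω
  simp only [ind, hF.le_iff_le]

variable {Ω : Type} [MeasurableSpace Ω] {P : Measure Ω}

lemma cov_ind_ind {Z W : Ω → ℝ} (hZ : Measurable Z) (hW : Measurable W) (x y : ℝ) :
    cov P (ind Z x) (ind W y) =
      P.real ({ω | Z ω ≤ x} ∩ {ω | W ω ≤ y}) - P.real {ω | Z ω ≤ x} * P.real {ω | W ω ≤ y} := by
  have hZx : MeasurableSet {ω | Z ω ≤ x} := hZ measurableSet_Iic
  have hWy : MeasurableSet {ω | W ω ≤ y} := hW measurableSet_Iic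
  simp only [cov, ind_eq_indicator]
  rw [← Pi.mul_def, ← inter_indicator_one, integral_indicator_one (hZx.inter hWy),
    integral_indicator_one hZx, integral_indicator_one hWy]

lemma StrictlyStationary.map_eq {Y : ℤ → Ω → ℝ} (hstat : StrictlyStationary P Y)
    (hY : ∀ t, Measurable (Y t)) (k : ℤ) : P.map (Y k) = P.map (Y 0) := by
  have h := congrArg (Measure.map fun v : Fin 1 → ℝ => v 0) (hstat k 1 fun _ => 0)
  rwa [Measure.map_map (measurable_pi_apply 0) (measurable_pi_lambda _ fun _ => hY _),
    Measure.map_map (measurable_pi_apply 0) (measurable_pi_lambda _ fun _ => hY _),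
    zero_add] at h

lemma StrictlyStationary.measure_le_eq {Y : ℤ → Ω → ℝ} (hstat : StrictlyStationary P Y)
    (hY : ∀ t, Measurable (Y t)) (k : ℤ) (x : ℝ) :
    P {ω | Y k ω ≤ x} = P {ω | Y 0 ω ≤ x} := by
  have h := congrArg (· (Iic x)) (hstat.map_eq hY k)
  rwa [Measure.map_apply (hY _) measurableSet_Iic, Measure.map_apply (hY _) measurableSet_Iic] at h

lemma laplaceCov_eq_of_stationary {Y : ℤ → Ω → ℝ} (hstat : StrictlyStationary P Y)
    (hY : ∀ t, Measurable (Y t)) (k : ℤ) (x₁ x₂ : ℝ) :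
    laplaceCov P Y k x₁ x₂ = (P.map fun ω => (Y 0 ω, Y k ω)).real (Iic x₂ ×ˢ Iic x₁)
      - P.real {ω | Y 0 ω ≤ x₁} * P.real {ω | Y 0 ω ≤ x₂} := by
  rw [laplaceCov, cov_ind_ind (hY k) (hY 0), inter_comm, measureReal_def P {ω | Y k ω ≤ x₁},
    hstat.measure_le_eq hY, ← measureReal_def,
    map_measureReal_apply ((hY 0).prodMk (hY k)) (measurableSet_Iic.prod measurableSet_Iic)]
  rfl

theorem map_pair_eq_iff_laplaceCov_eq [IsProbabilityMeasure P] {Y : ℤ → Ω → ℝ}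
    (hstat : StrictlyStationary P Y) (hY : ∀ t, Measurable (Y t)) (k : ℤ) :
    P.map (fun ω => (Y 0 ω, Y k ω)) = P.map (fun ω => (Y 0 ω, Y (-k) ω)) ↔
      ∀ x₁ x₂, laplaceCov P Y k x₁ x₂ = laplaceCov P Y (-k) x₁ x₂ := by
  simp only [laplaceCov_eq_of_stationary hstat hY, sub_left_inj]
  refine ⟨fun h x₁ x₂ => by rw [h], fun h => ?_⟩
  exact Measure.ext_of_Iic_prod_Iic fun a b => (measureReal_eq_measureReal_iff).mp (h b a)

lemma im_laplaceSpec_eq_zero_iff (Y : ℤ → Ω → ℝ) (x₁ x₂ ω : ℝ) :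
    (laplaceSpec P Y x₁ x₂ ω).im = 0 ↔
      (∑' k : ℤ, (laplaceCov P Y k x₁ x₂ : ℂ) * Complex.exp (-Complex.I * k * ω)).im = 0 := by
  rw [laplaceSpec, show 1 / (2 * (Real.pi : ℂ)) = ((2 * Real.pi)⁻¹ : ℝ) by push_cast; ring,
    Complex.im_ofReal_mul, mul_eq_zero, or_iff_right (by positivity)]

theorem forall_im_laplaceSpec_eq_zero_iff {Y : ℤ → Ω → ℝ} {x₁ x₂ : ℝ}
    (hsum : Summable fun k : ℤ => |laplaceCov P Y k x₁ x₂|) :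
    (∀ ω, (laplaceSpec P Y x₁ x₂ ω).im = 0) ↔
      ∀ k, laplaceCov P Y k x₁ x₂ = laplaceCov P Y (-k) x₁ x₂ := by
  simp only [im_laplaceSpec_eq_zero_iff]
  exact im_tsum_mul_exp_eq_zero_iff hsum

lemma copulaCov_cdf' {Y : ℤ → Ω → ℝ} (hF : StrictMono (cdf' P (Y 0))) (k : ℤ) (x₁ x₂ : ℝ) :
    copulaCov P Y k (cdf' P (Y 0) x₁) (cdf' P (Y 0) x₂) = laplaceCov P Y k x₁ x₂ := by
  simp only [copulaCov, laplaceCov, ind_comp_of_strictMono hF]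

lemma copulaSpec_cdf' {Y : ℤ → Ω → ℝ} (hF : StrictMono (cdf' P (Y 0))) (x₁ x₂ ω : ℝ) :
    copulaSpec P Y (cdf' P (Y 0) x₁) (cdf' P (Y 0) x₂) ω = laplaceSpec P Y x₁ x₂ ω := by
  simp only [copulaSpec, laplaceSpec, copulaCov_cdf' hF]

lemma cdf'_eq_cdf_map [IsProbabilityMeasure P] {Z : Ω → ℝ} (hZ : Measurable Z) :
    cdf' P Z = cdf (P.map Z) := by
  have := Measure.isProbabilityMeasure_map (μ := P) hZ.aemeasurable
  funext x
  rw [cdf_eq_real, map_measureReal_apply hZ measurableSet_Iic]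
  rfl

lemma range_cdf' [IsProbabilityMeasure P] {Z : Ω → ℝ} (hZ : Measurable Z)
    (hcont : Continuous (cdf' P Z)) (hmono : StrictMono (cdf' P Z)) :
    Set.range (cdf' P Z) = Set.Ioo 0 1 := by
  rw [cdf'_eq_cdf_map hZ] at hcont hmono ⊢
  ext τ
  constructor
  · rintro ⟨x, rfl⟩
    exact ⟨(cdf_nonneg _ _).trans_lt (hmono (sub_one_lt x)),
      (hmono (lt_add_one x)).trans_le (cdf_le_one _ _)⟩
  · intro hτ
    obtain ⟨a, ha⟩ := ((tendsto_cdf_atBot _).eventually (eventually_lt_nhds hτ.1)).exists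
    obtain ⟨b, hb⟩ := ((tendsto_cdf_atTop _).eventually (eventually_gt_nhds hτ.2)).exists
    exact intermediate_value_univ a b hcont ⟨ha.le, hb.le⟩

end DHKV

theorem statement1
    {Ω : Type} [MeasurableSpace Ω] (P : Measure Ω) [IsProbabilityMeasure P]
    (Y : ℤ → Ω → ℝ) (hYmeas : ∀ t, Measurable (Y t))
    (hstat : StrictlyStationary P Y)
    (hFcont : Continuous (cdf' P (Y 0)))
    (hFmono : StrictMono (cdf' P (Y 0)))
    (hsum : ∀ x₁ x₂ : ℝ, Summable fun k : ℤ => |laplaceCov P Y k x₁ x₂|) :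
    ((∀ k : ℤ, P.map (fun ωo => (Y 0 ωo, Y k ωo)) = P.map (fun ωo => (Y 0 ωo, Y (-k) ωo)))
        ↔ (∀ (ω x₁ x₂ : ℝ), (laplaceSpec P Y x₁ x₂ ω).im = 0)) ∧
    ((∀ (ω x₁ x₂ : ℝ), (laplaceSpec P Y x₁ x₂ ω).im = 0)
        ↔ (∀ (ω : ℝ) (τ₁ τ₂ : ℝ), τ₁ ∈ Set.Ioo (0:ℝ) 1 → τ₂ ∈ Set.Ioo (0:ℝ) 1 →
             (copulaSpec P Y τ₁ τ₂ ω).im = 0)) := by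
  have hspec x₁ x₂ := forall_im_laplaceSpec_eq_zero_iff (hsum x₁ x₂)
  have hrange := range_cdf' (hYmeas 0) hFcont hFmono
  refine ⟨?_, ⟨fun h ω τ₁ τ₂ h₁ h₂ => ?_, fun h ω x₁ x₂ => ?_⟩⟩
  · simp only [map_pair_eq_iff_laplaceCov_eq hstat hYmeas]
    exact ⟨fun h ω x₁ x₂ => (hspec x₁ x₂).2 (fun k => h k x₁ x₂) ω,
      fun h k x₁ x₂ => (hspec x₁ x₂).1 (fun ω => h ω x₁ x₂) k⟩
  · rw [← hrange] at h₁ h₂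
    obtain ⟨x₁, rfl⟩ := h₁
    obtain ⟨x₂, rfl⟩ := h₂
    rw [copulaSpec_cdf' hFmono]
    exact h ω x₁ x₂
  · rw [← copulaSpec_cdf' hFmono]
    exact h ω _ _ (hrange ▸ Set.mem_range_self x₁) (hrange ▸ Set.mem_range_self x₂)
end
end

section
/- Let (Ω,𝒜,P) be a probability space, d ≥ 1, and λ > 0. For each n ∈ ℕ let F_n be a finite nonempty index set; for each ω ∈ F_n let Z_{n,ω}: Ω × ℝ^d → ℝ be a random function that is convex in its ℝ^d argument (measurable in the first), let ζ_{n,ω}: Ω → ℝ^d be random vectors and Q_{n,ω} symmetric positive-definite d×d (possibly random) matrices whose smallest eigenvalue is at least λ for all ω ∈ F_n and all n ≥ n₀. Set Z̄_{n,ω}(δ) := −δᵀζ_{n,ω} + (1/2) δᵀ Q_{n,ω} δ, with minimizer δ̃_{n,ω} := Q_{n,ω}^{−1} ζ_{n,ω}. Let a_n be positive reals with a_n → 0, and suppose that Δ_n := sup_{ω∈F_n} sup_{δ: ‖δ − δ̃_{n,ω}‖ ≤ a_n} |Z_{n,ω}(δ) − Z̄_{n,ω}(δ)| satisfies Δ_n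 / a_n² → 0 in probability. Then for any random vectors δ̂_{n,ω}: Ω → ℝ^d satisfying Z_{n,ω}(δ̂_{n,ω}) ≤ Z_{n,ω}(δ) for all δ ∈ ℝ^d (i.e., δ̂_{n,ω} minimizes Z_{n,ω}), one has sup_{ω∈F_n} ‖δ̂_{n,ω} − δ̃_{n,ω}‖ / a_n → 0 in probability. -/
/-!
Pollard's argument. Fix one index and write `f = Z`, `g = Z̄`. If the minimizer `δ̂` of the
convex function `f` lies at distance at least `r` from `δ̃`, then by convexity `f` is at most
`f δ̃` at some point of the sphere of radius `r` around `δ̃`, whereas `g` exceeds `g δ̃` there by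
at least `λ r² / 2`. Since `f` and `g` differ by at most `Δ` on the ball, `λ r² / 4 ≤ Δ`.
Taking `r = min ε 1 · aₙ` shows that `{ε aₙ < sup ‖δ̂ - δ̃‖}` lies inside `{c aₙ² < Δₙ}` for
`c = λ min(ε, 1)² / 8`, and the probability of the latter tends to zero.
-/

open MeasureTheory Filter Topology

noncomputable section

lemma ConvexOn.exists_norm_sub_eq_le {E : Type*} [NormedAddCommGroup E] [NormedSpace ℝ E]
    {f : E → ℝ} (hf : ConvexOn ℝ Set.univ f) {x y : E} (hxy : f y ≤ f x) {r : ℝ}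
    (hr : 0 < r) (hry : r ≤ ‖y - x‖) : ∃ z, ‖z - x‖ = r ∧ f z ≤ f x := by
  have hyx : 0 < ‖y - x‖ := hr.trans_le hry
  set t := r / ‖y - x‖
  have ht0 : 0 ≤ t := by positivity
  have ht1 : t ≤ 1 := div_le_one_of_le₀ hry hyx.le
  refine ⟨x + t • (y - x), ?_, ?_⟩
  · rw [add_sub_cancel_left, norm_smul, Real.norm_of_nonneg ht0, div_mul_cancel₀ _ hyx.ne']
  · have hz : x + t • (y - x) = (1 - t) • x + t • y := by module
    calc f (x + t • (y - x)) ≤ (1 - t) • f x + t • f y := by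
          rw [hz]; exact hf.2 trivial trivial (by linarith) ht0 (by ring)
      _ ≤ f x := by simp only [smul_eq_mul]; nlinarith

lemma ConvexOn.mul_sq_le_of_abs_sub_le {E : Type*} [NormedAddCommGroup E] [NormedSpace ℝ E]
    {f g : E → ℝ} (hf : ConvexOn ℝ Set.univ f) {x y : E} (hxy : f y ≤ f x) {κ r D : ℝ}
    (hg : ∀ z, κ * ‖z - x‖ ^ 2 ≤ g z - g x)
    (hfg : ∀ z ∈ Metric.closedBall x r, |f z - g z| ≤ D)
    (hr : 0 < r) (hry : r ≤ ‖y - x‖) : κ * r ^ 2 ≤ 2 * D := by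
  obtain ⟨z, hzr, hzx⟩ := hf.exists_norm_sub_eq_le hxy hr hry
  have hz := hfg z (by rw [Metric.mem_closedBall, dist_eq_norm, hzr])
  have hx := hfg x (Metric.mem_closedBall_self hr.le)
  have := hg z
  rw [hzr] at this
  linarith [abs_le.1 hz, abs_le.1 hx]

lemma IsCompact.le_biSup_of_continuousOn {E : Type*} [TopologicalSpace E] {s : Set E}
    {h : E → ℝ} (hs : IsCompact s) (hh : ContinuousOn h s) {x : E} (hx : x ∈ s) :
    h x ≤ ⨆ y ∈ s, h y := by
  refine le_ciSup₂ (f := fun y (_ : y ∈ s) => h y) ?_ x hx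
  convert hs.bddAbove_image hh
  ext
  simp [eq_comm]

section QuadraticObjective

open Matrix

variable {m : Type*} [Fintype m]

lemma sum_sum_mul_mul_eq_dotProduct_mulVec (Q : Matrix m m ℝ) (x y : m → ℝ) :
    ∑ i, ∑ j, x i * Q i j * y j = x ⬝ᵥ Q *ᵥ y := by
  simp [dotProduct, mulVec, Finset.mul_sum, mul_assoc]

def quadraticObjective (ζ : m → ℝ) (Q : Matrix m m ℝ) (δ : m → ℝ) : ℝ :=
  -(∑ i, δ i * ζ i) + 1 / 2 * ∑ i, ∑ j, δ i * Q i j * δ j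

lemma quadraticObjective_eq (ζ : m → ℝ) (Q : Matrix m m ℝ) (δ : m → ℝ) :
    quadraticObjective ζ Q δ = -(δ ⬝ᵥ ζ) + 1 / 2 * (δ ⬝ᵥ Q *ᵥ δ) := by
  rw [quadraticObjective, sum_sum_mul_mul_eq_dotProduct_mulVec]
  rfl

lemma quadraticObjective_sub_of_mulVec_eq {ζ x : m → ℝ} {Q : Matrix m m ℝ} (hQ : Q.IsSymm)
    (hx : Q *ᵥ x = ζ) (y : m → ℝ) :
    quadraticObjective ζ Q y - quadraticObjective ζ Q x =
      1 / 2 * ∑ i, ∑ j, (y i - x i) * Q i j * (y j - x j) := by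
  have hcomm : x ⬝ᵥ Q *ᵥ y = y ⬝ᵥ Q *ᵥ x := by
    rw [dotProduct_mulVec, dotProduct_comm]
    conv_lhs => rw [← hQ.eq, vecMul_transpose]
  have h := sum_sum_mul_mul_eq_dotProduct_mulVec Q (y - x) (y - x)
  simp only [Pi.sub_apply] at h
  rw [h, quadraticObjective_eq, quadraticObjective_eq, ← hx, mulVec_sub, dotProduct_sub,
    sub_dotProduct, sub_dotProduct]
  linarith

lemma mul_sq_le_biSup_abs_sub_quadraticObjective {f : EuclideanSpace ℝ m → ℝ}
    (hf : ConvexOn ℝ Set.univ f) {ζ : m → ℝ} {Q : Matrix m m ℝ} (hQ : Q.IsSymm) {lam : ℝ}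
    (hlam : ∀ v : EuclideanSpace ℝ m, lam * ‖v‖ ^ 2 ≤ ∑ i, ∑ j, v i * Q i j * v j)
    {x y : EuclideanSpace ℝ m} (hx : Q *ᵥ x = ζ) (hyx : f y ≤ f x) {r A : ℝ}
    (hr : 0 < r) (hrA : r ≤ A) (hry : r ≤ ‖y - x‖) :
    lam / 4 * r ^ 2 ≤ ⨆ z ∈ Metric.closedBall x A, |f z - quadraticObjective ζ Q z| := by
  set D := ⨆ z ∈ Metric.closedBall x A, |f z - quadraticObjective ζ Q z|
  have hgrowth : ∀ z, lam / 2 * ‖z - x‖ ^ 2 ≤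
      quadraticObjective ζ Q z - quadraticObjective ζ Q x := fun z => by
    have := hlam (z - x)
    simp only [WithLp.ofLp_sub, Pi.sub_apply] at this
    rw [quadraticObjective_sub_of_mulVec_eq hQ hx]
    linarith
  have hcont : Continuous fun z : EuclideanSpace ℝ m => |f z - quadraticObjective ζ Q z| := by
    have := continuousOn_univ.1 (hf.continuousOn isOpen_univ)
    unfold quadraticObjective
    fun_prop
  have hdev : ∀ z ∈ Metric.closedBall x r, |f z - quadraticObjective ζ Q z| ≤ D :=
    fun z hz => (isCompact_closedBall x A).le_biSup_of_continuousOn hcont.continuousOn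
      (Metric.closedBall_subset_closedBall hrA hz)
  linarith [hf.mul_sq_le_of_abs_sub_le hyx hgrowth hdev hr hry]

end QuadraticObjective

theorem statement9_general
    {Ω : Type} [MeasurableSpace Ω] (P : Measure Ω)
    (d : ℕ) (lam : ℝ) (hlam : 0 < lam) (n₀ : ℕ)
    (ι : ℕ → Type) [∀ n, Fintype (ι n)] [∀ n, Nonempty (ι n)]
    (Z : (n : ℕ) → ι n → Ω → EuclideanSpace ℝ (Fin d) → ℝ)
    (hZconv : ∀ (n : ℕ) (w : ι n) (ωo : Ω), ConvexOn ℝ Set.univ (Z n w ωo))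
    (ζ : (n : ℕ) → ι n → Ω → EuclideanSpace ℝ (Fin d))
    (Q : (n : ℕ) → ι n → Ω → Matrix (Fin d) (Fin d) ℝ)
    (hQsym : ∀ (n : ℕ) (w : ι n) (ωo : Ω), (Q n w ωo).IsSymm)
    (hQeig : ∀ n ≥ n₀, ∀ (w : ι n) (ωo : Ω) (δ : EuclideanSpace ℝ (Fin d)),
      lam * ‖δ‖ ^ 2 ≤ ∑ i, ∑ j, δ i * Q n w ωo i j * δ j)
    -- the minimizer `δ̃ = Q⁻¹ ζ` of the quadratic comparison objective
    (δt : (n : ℕ) → ι n → Ω → EuclideanSpace ℝ (Fin d))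
    (hδt : ∀ (n : ℕ) (w : ι n) (ωo : Ω),
      (Q n w ωo).mulVec (δt n w ωo) = ζ n w ωo)
    (a : ℕ → ℝ) (ha : ∀ n, 0 < a n)
    -- `Δ_n / a_n² → 0` in probability, where `Z̄` is the quadratic comparison objective
    (hΔ : ∀ ε : ℝ, 0 < ε →
      Tendsto (fun n : ℕ =>
          P {ωo | ε * (a n) ^ 2 <
            ⨆ w : ι n, ⨆ δ ∈ Metric.closedBall (δt n w ωo) (a n),
              |Z n w ωo δ -
                (-(∑ i, δ i * ζ n w ωo i)
                  + (1 / 2) * ∑ i, ∑ j, δ i * Q n w ωo i j * δ j)|})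
        atTop (nhds 0))
    (δh : (n : ℕ) → ι n → Ω → EuclideanSpace ℝ (Fin d))
    (hδh : ∀ (n : ℕ) (w : ι n) (ωo : Ω) (δ : EuclideanSpace ℝ (Fin d)),
      Z n w ωo (δh n w ωo) ≤ Z n w ωo δ) :
    ∀ ε : ℝ, 0 < ε →
      Tendsto (fun n : ℕ =>
          P {ωo | ε * a n < ⨆ w : ι n, ‖δh n w ωo - δt n w ωo‖})
        atTop (nhds 0) := by
  intro ε hε
  set ε₁ := min ε 1
  have hε₁ : 0 < ε₁ := lt_min hε one_pos
  have hevent : ∀ n ≥ n₀, {ωo | ε * a n < ⨆ w, ‖δh n w ωo - δt n w ωo‖} ⊆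
      {ωo | lam / 8 * ε₁ ^ 2 * a n ^ 2 < ⨆ w, ⨆ δ ∈ Metric.closedBall (δt n w ωo) (a n),
        |Z n w ωo δ - quadraticObjective (ζ n w ωo) (Q n w ωo) δ|} := by
    intro n hn ωo (hωo : ε * a n < _)
    obtain ⟨w, hw⟩ := exists_lt_of_lt_ciSup hωo
    have han := ha n
    have hr : ε₁ * a n ≤ ‖δh n w ωo - δt n w ωo‖ :=
      (mul_le_mul_of_nonneg_right (min_le_left _ _) han.le).trans hw.le
    have hrA : ε₁ * a n ≤ a n := mul_le_of_le_one_left han.le (min_le_right _ _)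
    calc lam / 8 * ε₁ ^ 2 * a n ^ 2 < lam / 4 * (ε₁ * a n) ^ 2 := by
          have : 0 < lam * (ε₁ * a n) ^ 2 := by positivity
          linarith
      _ ≤ _ := mul_sq_le_biSup_abs_sub_quadraticObjective (hZconv n w ωo) (hQsym n w ωo)
          (hQeig n hn w ωo) (hδt n w ωo) (hδh n w ωo _) (by positivity) hrA hr
      _ ≤ _ := le_ciSup (f := fun w => ⨆ δ ∈ Metric.closedBall (δt n w ωo) (a n),
          |Z n w ωo δ - quadraticObjective (ζ n w ωo) (Q n w ωo) δ|)
          (Set.finite_range _).bddAbove w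
  -- the event bounding `hevent` is that of `hΔ`, since `quadraticObjective` unfolds to `Z̄`
  refine tendsto_of_tendsto_of_tendsto_of_le_of_le' tendsto_const_nhds
    (hΔ (lam / 8 * ε₁ ^ 2) (by positivity)) (.of_forall fun _ => zero_le) ?_
  filter_upwards [eventually_ge_atTop n₀] with n hn using measure_mono (hevent n hn)

/-- Lemma A.1 (uniform convex-minimization comparison, generalizing Pollard's argument):
if the random convex objectives are uniformly close to quadratic comparison objectives on
balls of radius `a n` around the quadratic minimizers, at rate `o_P(a_n²)`, then the
minimizers are uniformly `o_P(a_n)`-close. -/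
theorem statement9
    {Ω : Type} [MeasurableSpace Ω] (P : Measure Ω) [IsProbabilityMeasure P]
    (d : ℕ) (hd : 1 ≤ d) (lam : ℝ) (hlam : 0 < lam) (n₀ : ℕ)
    (ι : ℕ → Type) [∀ n, Fintype (ι n)] [∀ n, Nonempty (ι n)]
    (Z : (n : ℕ) → ι n → Ω → EuclideanSpace ℝ (Fin d) → ℝ)
    (hZconv : ∀ (n : ℕ) (w : ι n) (ωo : Ω), ConvexOn ℝ Set.univ (Z n w ωo))
    (hZmeas : ∀ (n : ℕ) (w : ι n) (δ : EuclideanSpace ℝ (Fin d)),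
      Measurable fun ωo => Z n w ωo δ)
    (ζ : (n : ℕ) → ι n → Ω → EuclideanSpace ℝ (Fin d))
    (Q : (n : ℕ) → ι n → Ω → Matrix (Fin d) (Fin d) ℝ)
    (hQsym : ∀ (n : ℕ) (w : ι n) (ωo : Ω), (Q n w ωo).IsSymm)
    (hQeig : ∀ n ≥ n₀, ∀ (w : ι n) (ωo : Ω) (δ : EuclideanSpace ℝ (Fin d)),
      lam * ‖δ‖ ^ 2 ≤ ∑ i, ∑ j, δ i * Q n w ωo i j * δ j)
    -- the minimizer `δ̃ = Q⁻¹ ζ` of the quadratic comparison objective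
    (δt : (n : ℕ) → ι n → Ω → EuclideanSpace ℝ (Fin d))
    (hδt : ∀ (n : ℕ) (w : ι n) (ωo : Ω),
      (Q n w ωo).mulVec (δt n w ωo) = ζ n w ωo)
    (a : ℕ → ℝ) (ha : ∀ n, 0 < a n) (ha0 : Tendsto a atTop (nhds 0))
    -- `Δ_n / a_n² → 0` in probability, where `Z̄` is the quadratic comparison objective
    (hΔ : ∀ ε : ℝ, 0 < ε →
      Tendsto (fun n : ℕ =>
          P {ωo | ε * (a n) ^ 2 <
            ⨆ w : ι n, ⨆ δ ∈ Metric.closedBall (δt n w ωo) (a n),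
              |Z n w ωo δ -
                (-(∑ i, δ i * ζ n w ωo i)
                  + (1 / 2) * ∑ i, ∑ j, δ i * Q n w ωo i j * δ j)|})
        atTop (nhds 0))
    (δh : (n : ℕ) → ι n → Ω → EuclideanSpace ℝ (Fin d))
    (hδh : ∀ (n : ℕ) (w : ι n) (ωo : Ω) (δ : EuclideanSpace ℝ (Fin d)),
      Z n w ωo (δh n w ωo) ≤ Z n w ωo δ) :
    ∀ ε : ℝ, 0 < ε →
      Tendsto (fun n : ℕ =>
          P {ωo | ε * a n < ⨆ w : ι n, ‖δh n w ωo - δt n w ωo‖})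
        atTop (nhds 0) :=
  statement9_general P d lam hlam n₀ ι Z hZconv ζ Q hQsym hQeig δt hδt a ha hΔ δh hδh
end
end

section
/- Let a < b, c > 0 and L ≥ 0. Let g: [a,b] → ℝ be strictly increasing with |g(x) − g(y)| ≥ c|x − y| for all x, y ∈ [a,b], and let h: [a,b] → ℝ be nondecreasing with sup_{t ∈ [a,b]} |g(t) − h(t)| ≤ L. Denote by h^{−1}(p) := inf{ t ∈ [a,b] : h(t) ≥ p } the generalized inverse of h on [a,b], and by g^{−1} the (ordinary) inverse of g. If g(a) + 2L/c ≤ g(b) − 2L/c, then sup_{t ∈ [g(a)+2L/c,\ g(b)−2L/c]} | h^{−1}(t) − g^{−1}(t) | ≤ 2L/c. -/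
/-!
Write `t = g x`. Since `g` grows at rate at least `c`, at `x + L/c` it exceeds `t` by at least
`L`, so `h ≥ t` there; and at any `s < x` with `h s ≥ t` we get `c (x - s) ≤ g x - g s ≤ L`.
Hence `h⁻¹(t)` lies within `L/c ≤ 2L/c` of `x = g⁻¹(t)`.
-/

noncomputable section

/-- Generalized inverse of a nondecreasing function `h` on `[a, b]`
(with the convention `inf ∅ = b`). -/
def genInv (h : ℝ → ℝ) (a b : ℝ) (p : ℝ) : ℝ :=
  sInf ({t : ℝ | t ∈ Set.Icc a b ∧ p ≤ h t} ∪ {b})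

open Set

section GenInv

variable {h : ℝ → ℝ} {a b p : ℝ}

lemma bddBelow_genInv_set (h : ℝ → ℝ) (a b p : ℝ) :
    BddBelow ({t : ℝ | t ∈ Icc a b ∧ p ≤ h t} ∪ {b}) :=
  (bddBelow_Icc.mono fun _ ht => ht.1).union bddBelow_singleton

lemma genInv_le_right (h : ℝ → ℝ) (a b p : ℝ) : genInv h a b p ≤ b :=
  csInf_le (bddBelow_genInv_set h a b p) (Or.inr rfl)

lemma genInv_le_of_le_apply {s : ℝ} (hs : s ∈ Icc a b) (hp : p ≤ h s) : genInv h a b p ≤ s :=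
  csInf_le (bddBelow_genInv_set h a b p) (Or.inl ⟨hs, hp⟩)

lemma le_genInv {y : ℝ} (hyb : y ≤ b) (hy : ∀ s ∈ Icc a b, p ≤ h s → y ≤ s) :
    y ≤ genInv h a b p :=
  le_csInf ⟨b, Or.inr rfl⟩ (by rintro s (⟨hs, hps⟩ | rfl); exacts [hy s hs hps, hyb])

lemma genInv_apply_of_strictMonoOn {g : ℝ → ℝ} {x : ℝ} (hg : StrictMonoOn g (Icc a b))
    (hx : x ∈ Icc a b) : genInv g a b (g x) = x :=
  le_antisymm (genInv_le_of_le_apply hx le_rfl)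
    (le_genInv hx.2 fun _ hs hgs => (hg.le_iff_le hx hs).mp hgs)

end GenInv

lemma mul_sub_le_sub_of_le_abs_sub {g : ℝ → ℝ} {s : Set ℝ} {c : ℝ} (hg : MonotoneOn g s)
    (hglip : ∀ x ∈ s, ∀ y ∈ s, c * |x - y| ≤ |g x - g y|) :
    ∀ x ∈ s, ∀ y ∈ s, x ≤ y → c * (y - x) ≤ g y - g x := by
  intro x hx y hy hxy
  simpa only [abs_of_nonneg (sub_nonneg.2 hxy), abs_of_nonneg (sub_nonneg.2 (hg hx hy hxy))]
    using hglip y hy x hx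

section Perturbation

variable {g h : ℝ → ℝ} {a b c L x : ℝ} (hc : 0 < c)
  (hgrow : ∀ x ∈ Icc a b, ∀ y ∈ Icc a b, x ≤ y → c * (y - x) ≤ g y - g x)
  (hclose : ∀ t ∈ Icc a b, |g t - h t| ≤ L)
include hc hgrow hclose

lemma genInv_apply_le_add_div (hx : x ∈ Icc a b) : genInv h a b (g x) ≤ x + L / c := by
  have hLc : 0 ≤ L / c := div_nonneg ((abs_nonneg _).trans (hclose x hx)) hc.le
  rcases le_or_gt (x + L / c) b with hyb | hby
  · have hy : x + L / c ∈ Icc a b := ⟨by linarith [hx.1], hyb⟩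
    have hgy : c * (L / c) ≤ g (x + L / c) - g x := by
      simpa using hgrow x hx _ hy (by linarith)
    rw [mul_div_cancel₀ L hc.ne'] at hgy
    have hhy := (abs_sub_le_iff.mp (hclose _ hy)).1
    exact genInv_le_of_le_apply hy (by linarith)
  · exact (genInv_le_right h a b _).trans hby.le

lemma sub_div_le_genInv_apply (hx : x ∈ Icc a b) : x - L / c ≤ genInv h a b (g x) := by
  have hLc : 0 ≤ L / c := div_nonneg ((abs_nonneg _).trans (hclose x hx)) hc.le
  refine le_genInv (by linarith [hx.2]) fun s hs hgs => ?_
  rcases le_total x s with hxs | hsx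
  · linarith
  · have hhs := (abs_sub_le_iff.mp (hclose s hs)).2
    have : c * (x - s) ≤ L := by linarith [hgrow s hs x hx hsx]
    rw [sub_le_comm, le_div_iff₀ hc]
    linarith

lemma abs_genInv_apply_sub_le (hx : x ∈ Icc a b) : |genInv h a b (g x) - x| ≤ L / c :=
  abs_sub_le_iff.mpr
    ⟨by linarith [genInv_apply_le_add_div hc hgrow hclose hx],
      by linarith [sub_div_le_genInv_apply hc hgrow hclose hx]⟩

end Perturbation

theorem statement19_general
    (a b c L : ℝ) (hab : a < b) (hc : 0 < c) (hL : 0 ≤ L)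
    (g h : ℝ → ℝ)
    (hg : StrictMonoOn g (Set.Icc a b))
    (hgcont : ContinuousOn g (Set.Icc a b))
    (hglip : ∀ x ∈ Set.Icc a b, ∀ y ∈ Set.Icc a b, c * |x - y| ≤ |g x - g y|)
    (hclose : ∀ t ∈ Set.Icc a b, |g t - h t| ≤ L) :
    ∀ t ∈ Set.Icc (g a + 2 * L / c) (g b - 2 * L / c),
      |genInv h a b t - genInv g a b t| ≤ 2 * L / c := by
  rintro t ⟨hat, htb⟩
  have hε : 0 ≤ 2 * L / c := by positivity
  have ht : t ∈ Icc (g a) (g b) := ⟨by linarith, by linarith⟩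
  obtain ⟨x, hx, rfl⟩ := intermediate_value_Icc hab.le hgcont ht
  have hgrow := mul_sub_le_sub_of_le_abs_sub hg.monotoneOn hglip
  rw [genInv_apply_of_strictMonoOn hg hx]
  calc |genInv h a b (g x) - x| ≤ L / c := abs_genInv_apply_sub_le hc hgrow hclose hx
    _ ≤ 2 * L / c := by gcongr; linarith

/-- Lemma on generalized inverses: if `g` is strictly increasing (with modulus `c`) and
continuous on `[a,b]`, and `h` is nondecreasing and uniformly `L`-close to `g` on `[a,b]`,
then the (generalized) inverses are uniformly `2L/c`-close on
`[g(a) + 2L/c, g(b) − 2L/c]`. -/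
theorem statement19
    (a b c L : ℝ) (hab : a < b) (hc : 0 < c) (hL : 0 ≤ L)
    (g h : ℝ → ℝ)
    (hg : StrictMonoOn g (Set.Icc a b))
    (hgcont : ContinuousOn g (Set.Icc a b))
    (hglip : ∀ x ∈ Set.Icc a b, ∀ y ∈ Set.Icc a b, c * |x - y| ≤ |g x - g y|)
    (hh : MonotoneOn h (Set.Icc a b))
    (hclose : ∀ t ∈ Set.Icc a b, |g t - h t| ≤ L)
    (hwindow : g a + 2 * L / c ≤ g b - 2 * L / c) :
    ∀ t ∈ Set.Icc (g a + 2 * L / c) (g b - 2 * L / c),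
      |genInv h a b t - genInv g a b t| ≤ 2 * L / c :=
  statement19_general a b c L hab hc hL g h hg hgcont hglip hclose
end
end
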